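/- The submonoid of End(F₂) generated by T̂₁ and T̂₂ is free on these two generators: the monoid homomorphism from the free monoid on two generators into the endomorphism monoid of F₂ sending the first generator to T̂₁ and the second to T̂₂ is injective. -/

import Mathlib

/-- The free group on two generators. -/
abbrev F2 := FreeGroup (Fin 2)

/-- The first generator `a` of `F₂`. -/
def a : F2 := FreeGroup.of 0

/-- The second generator `b` of `F₂`. -/
def b : F2 := FreeGroup.of 1

/-- The endomorphism `T̂₁` of `F₂` determined by `a ↦ a·b`, `b ↦ b`. -/
def T1hat : Monoid.End F2 := FreeGroup.lift fun i => if i = 0 then a * b else b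

/-- The endomorphism `T̂₂` of `F₂` determined by `a ↦ a`, `b ↦ b·a`. -/
def T2hat : Monoid.End F2 := FreeGroup.lift fun i => if i = 0 then a else b * a

/-! Abelianising, `T̂₁` and `T̂₂` act on the exponent sums `(p, q)` of a word as
`(p, q) ↦ (p, p + q)` and `(p, q) ↦ (p + q, q)`. Both preserve the cone `p, q > 0`, and `T̂₁`
maps it into `p < q`, `T̂₂` into `q < p`. Hence the image of `ab`, with exponent sums `(1, 1)`,
under a nonempty word remembers the word's first letter; as `T̂₁` and `T̂₂` are injective that
letter can be cancelled, and induction recovers the whole word (ping-pong for monoids). -/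

open Function

namespace FreeMonoid

variable {α M X : Type*} [Monoid M] [MulAction M X] {g : α → M} {Y : Set X} {P : α → Set X}
  {x₀ : X}

theorem lift_smul_mem (hmaps : ∀ i, Set.MapsTo (g i • ·) Y (P i)) (hPY : ∀ i, P i ⊆ Y)
    (hx₀ : x₀ ∈ Y) (w : FreeMonoid α) : lift g w • x₀ ∈ Y := by
  induction w using FreeMonoid.inductionOn' with
  | one => simpa using hx₀
  | of_mul i w ih => simpa [mul_smul] using hPY i (hmaps i ih)

theorem lift_of_mul_smul_mem (hmaps : ∀ i, Set.MapsTo (g i • ·) Y (P i)) (hPY : ∀ i, P i ⊆ Y)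
    (hx₀ : x₀ ∈ Y) (i : α) (w : FreeMonoid α) : lift g (of i * w) • x₀ ∈ P i := by
  simpa [mul_smul] using hmaps i (lift_smul_mem hmaps hPY hx₀ w)

theorem injective_lift_smul (hg : ∀ i, Injective (g i • · : X → X))
    (hmaps : ∀ i, Set.MapsTo (g i • ·) Y (P i)) (hPY : ∀ i, P i ⊆ Y)
    (hP : Pairwise (Disjoint on P)) (hx₀ : x₀ ∈ Y) (hx₀P : ∀ i, x₀ ∉ P i) :
    Injective fun w : FreeMonoid α => lift g w • x₀ := by
  have hmem := lift_of_mul_smul_mem hmaps hPY hx₀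
  intro w₁ w₂ (h : lift g w₁ • x₀ = lift g w₂ • x₀)
  induction w₁ using FreeMonoid.inductionOn' generalizing w₂ with
  | one =>
    cases w₂ with
    | one => rfl
    | of_mul j w₂ =>
      rw [map_one, one_smul] at h
      exact absurd (h ▸ hmem j w₂) (hx₀P j)
  | of_mul i w₁ ih =>
    cases w₂ with
    | one =>
      rw [map_one, one_smul] at h
      exact absurd (h ▸ hmem i w₁) (hx₀P i)
    | of_mul j w₂ =>
      obtain rfl : i = j := by
        by_contra hij
        exact (hP hij).ne_of_mem (hmem i w₁) (hmem j w₂) h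
      simp only [map_mul, lift_eval_of, mul_smul] at h
      rw [ih (hg i h)]

end FreeMonoid

instance Monoid.End.applyMulAction (G : Type*) [Monoid G] : MulAction (Monoid.End G) G where
  smul f x := f x
  one_smul _ := rfl
  mul_smul _ _ _ := rfl

namespace FreeGroup

variable {α : Type*} [DecidableEq α]

def exponentSum (i : α) : FreeGroup α →* Multiplicative ℤ :=
  lift fun j => if j = i then Multiplicative.ofAdd 1 else 1

@[simp]
theorem exponentSum_of (i j : α) :
    exponentSum i (of j) = if j = i then Multiplicative.ofAdd 1 else 1 :=
  lift_apply_of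

end FreeGroup

open FreeGroup

theorem exponentSum_zero_T1hat (x : F2) : exponentSum 0 (T1hat x) = exponentSum 0 x := by
  change (exponentSum 0).comp T1hat x = exponentSum 0 x
  congr 1; ext i; fin_cases i <;> simp [T1hat, a, b]

theorem exponentSum_one_T1hat (x : F2) :
    exponentSum 1 (T1hat x) = exponentSum 0 x * exponentSum 1 x := by
  change (exponentSum 1).comp T1hat x =
    (exponentSum 0 * exponentSum 1 : F2 →* Multiplicative ℤ) x
  congr 1; ext i; fin_cases i <;> simp [T1hat, a, b]

theorem exponentSum_zero_T2hat (x : F2) :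
    exponentSum 0 (T2hat x) = exponentSum 0 x * exponentSum 1 x := by
  change (exponentSum 0).comp T2hat x =
    (exponentSum 0 * exponentSum 1 : F2 →* Multiplicative ℤ) x
  congr 1; ext i; fin_cases i <;> simp [T2hat, a, b]

theorem exponentSum_one_T2hat (x : F2) : exponentSum 1 (T2hat x) = exponentSum 1 x := by
  change (exponentSum 1).comp T2hat x = exponentSum 1 x
  congr 1; ext i; fin_cases i <;> simp [T2hat, a, b]

theorem T1hat_injective : Injective T1hat := by
  let S : F2 →* F2 := lift fun i => if i = 0 then a * b⁻¹ else b
  have hS : S.comp T1hat = MonoidHom.id F2 := by ext i; fin_cases i <;> simp [S, T1hat, a, b]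
  exact LeftInverse.injective (DFunLike.congr_fun hS)

theorem T2hat_injective : Injective T2hat := by
  let S : F2 →* F2 := lift fun i => if i = 0 then a else b * a⁻¹
  have hS : S.comp T2hat = MonoidHom.id F2 := by ext i; fin_cases i <;> simp [S, T2hat, a, b]
  exact LeftInverse.injective (DFunLike.congr_fun hS)

def positiveCone : Set F2 := {x | 1 < exponentSum 0 x ∧ 1 < exponentSum 1 x}

theorem T1hat_mapsTo :
    Set.MapsTo T1hat positiveCone {x ∈ positiveCone | exponentSum 0 x < exponentSum 1 x} := by
  rintro x ⟨h₀, h₁⟩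
  simp only [Set.mem_ofPred_eq, positiveCone, exponentSum_zero_T1hat, exponentSum_one_T1hat]
  exact ⟨⟨h₀, one_lt_mul' h₀ h₁⟩, lt_mul_of_one_lt_right' _ h₁⟩

theorem T2hat_mapsTo :
    Set.MapsTo T2hat positiveCone {x ∈ positiveCone | exponentSum 1 x < exponentSum 0 x} := by
  rintro x ⟨h₀, h₁⟩
  simp only [Set.mem_ofPred_eq, positiveCone, exponentSum_zero_T2hat, exponentSum_one_T2hat]
  exact ⟨⟨one_lt_mul' h₀ h₁, h₁⟩, lt_mul_of_one_lt_left' _ h₀⟩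

theorem exponentSum_a_mul_b (i : Fin 2) : exponentSum i (a * b) = Multiplicative.ofAdd 1 := by
  fin_cases i <;> simp [a, b]

theorem a_mul_b_mem_positiveCone : a * b ∈ positiveCone := by
  have h : (1 : Multiplicative ℤ) < .ofAdd 1 := Multiplicative.ofAdd_lt.2 one_pos
  simpa only [positiveCone, Set.mem_ofPred_eq, exponentSum_a_mul_b] using ⟨h, h⟩

/-- The submonoid of `End(F₂)` generated by `T̂₁` and `T̂₂` is free on these two
generators: the monoid homomorphism from the free monoid on two generators sending the
first generator to `T̂₁` and the second one to `T̂₂` is injective. -/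
theorem T1hat_T2hat_generate_free_submonoid :
    Function.Injective
      ⇑(FreeMonoid.lift fun i : Fin 2 => if i = 0 then T1hat else T2hat) := by
  let P : Fin 2 → Set F2 := ![{x ∈ positiveCone | exponentSum 0 x < exponentSum 1 x},
    {x ∈ positiveCone | exponentSum 1 x < exponentSum 0 x}]
  have hP : Pairwise (Disjoint on P) := by
    intro i j hij
    fin_cases i <;> fin_cases j <;> simp_all [P, Set.disjoint_left, lt_asymm]
  have hab : ∀ i, a * b ∉ P i := by
    simp [Fin.forall_fin_two, P, exponentSum_a_mul_b]
  exact Injective.of_comp (f := (· • (a * b))) (FreeMonoid.injective_lift_smul (P := P)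
    (Fin.forall_fin_two.2 ⟨T1hat_injective, T2hat_injective⟩)
    (Fin.forall_fin_two.2 ⟨T1hat_mapsTo, T2hat_mapsTo⟩)
    (Fin.forall_fin_two.2 ⟨Set.sep_subset _ _, Set.sep_subset _ _⟩) hP
    a_mul_b_mem_positiveCone hab)
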